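/- arXiv:1401.0752 — 2 statements merged into one kernel-verified Lean document; each statement's English description precedes it below -/
import Mathlib

section
/- Let I ⊆ ℕ and let M_I be the monoid presented by ⟨a,b,c,d | a·bⁱ·c = a·bⁱ·d (i ∈ I)⟩, with π : F → M_I the quotient map from the free monoid F on {a,b,c,d}. For all words w, u ∈ F with π(w) = π(u): |w| = |u|, and for every k with 1 ≤ k ≤ |w|, the length-k prefixes satisfy π(w[k]) = π(u[k]). -/
/-- The four-letter alphabet `{a, b, c, d}`. -/
inductive Alpha : Type
  | a | b | c | d

/-- The defining relations of `M_I`: `a·bⁱ·c = a·bⁱ·d` for `i ∈ I`. -/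
def relI (I : Set ℕ) : FreeMonoid Alpha → FreeMonoid Alpha → Prop :=
  fun x y => ∃ i ∈ I,
    x = FreeMonoid.of Alpha.a * FreeMonoid.of Alpha.b ^ i * FreeMonoid.of Alpha.c ∧
    y = FreeMonoid.of Alpha.a * FreeMonoid.of Alpha.b ^ i * FreeMonoid.of Alpha.d

/-- The monoid congruence on the free monoid on `{a,b,c,d}` generated by the relations
`a·bⁱ·c = a·bⁱ·d` for `i ∈ I`; the monoid `M_I` is its quotient `(conI I).Quotient`,
with quotient map `(conI I).mk'`. -/
def conI (I : Set ℕ) : Con (FreeMonoid Alpha) := conGen (relI I)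

/-!
Having equal length and pairwise congruent prefixes is itself a congruence on the free monoid,
since a prefix of `w * v` is a prefix of `w` times a prefix of `v`. Each defining relation
`a bⁱ c ~ a bⁱ d` has this property, its proper prefixes being literally equal, so the property
holds for the whole congruence generated by the relations.
-/

namespace FreeMonoid

variable {α : Type*}

def takePrefix (k : ℕ) (w : FreeMonoid α) : FreeMonoid α := ofList (w.toList.take k)

theorem takePrefix_mul (k : ℕ) (w v : FreeMonoid α) :
    (w * v).takePrefix k = w.takePrefix k * v.takePrefix (k - w.length) :=
  congrArg ofList (List.take_append ..)

theorem takePrefix_mul_of_le_length {k : ℕ} {w : FreeMonoid α} (v : FreeMonoid α)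
    (hk : k ≤ w.length) : (w * v).takePrefix k = w.takePrefix k :=
  congrArg ofList (List.take_append_of_le_length hk)

theorem takePrefix_of_length_le {k : ℕ} {w : FreeMonoid α} (hk : w.length ≤ k) :
    w.takePrefix k = w :=
  congrArg ofList (List.take_of_length_le hk)

def prefixCon (c : Con (FreeMonoid α)) : Con (FreeMonoid α) where
  r w u := w.length = u.length ∧ ∀ k, c (w.takePrefix k) (u.takePrefix k)
  iseqv :=
    { refl _ := ⟨rfl, fun _ => c.refl _⟩
      symm := fun ⟨hl, hp⟩ => ⟨hl.symm, fun k => c.symm (hp k)⟩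
      trans := fun ⟨hl, hp⟩ ⟨hl', hp'⟩ => ⟨hl.trans hl', fun k => c.trans (hp k) (hp' k)⟩ }
  mul' := by
    rintro w₁ u₁ w₂ u₂ ⟨hl₁, hp₁⟩ ⟨hl₂, hp₂⟩
    refine ⟨by simp only [length_mul, hl₁, hl₂], fun k => ?_⟩
    rw [takePrefix_mul, takePrefix_mul, hl₁]
    exact c.mul (hp₁ k) (hp₂ _)

end FreeMonoid

open FreeMonoid

theorem relI_le_prefixCon (I : Set ℕ) : relI I ≤ prefixCon (conI I) := by
  rintro x y ⟨i, hi, rfl, rfl⟩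
  set p := of Alpha.a * of Alpha.b ^ i
  refine ⟨by simp only [length_mul, length_of], fun k => ?_⟩
  rcases le_or_gt k p.length with hk | hk
  · rw [takePrefix_mul_of_le_length _ hk, takePrefix_mul_of_le_length _ hk]
    exact (conI I).refl _
  · rw [takePrefix_of_length_le (by rw [length_mul, length_of]; omega),
      takePrefix_of_length_le (by rw [length_mul, length_of]; omega)]
    exact ConGen.Rel.of _ _ ⟨i, hi, rfl, rfl⟩

theorem conI_le_prefixCon (I : Set ℕ) : conI I ≤ prefixCon (conI I) :=
  Con.conGen_le.mpr (relI_le_prefixCon I)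

/-- In `M_I`, equal words have equal length and, for every `1 ≤ k ≤ |w|`, equal
length-`k` prefixes. -/
theorem mi_equal_words_prefixes (I : Set ℕ) (w u : FreeMonoid Alpha)
    (h : (conI I).mk' w = (conI I).mk' u) :
    w.length = u.length ∧
    ∀ k : ℕ, 1 ≤ k → k ≤ w.length →
      (conI I).mk' (FreeMonoid.ofList (w.toList.take k)) =
        (conI I).mk' (FreeMonoid.ofList (u.toList.take k)) := by
  obtain ⟨hl, hp⟩ := conI_le_prefixCon I ((conI I).eq.mp h)
  exact ⟨hl, fun k _ _ => (conI I).eq.mpr (hp k)⟩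
end

section
/- Let I ⊆ ℕ and let M_I be the monoid presented by ⟨a,b,c,d | a·bⁱ·c = a·bⁱ·d (i ∈ I)⟩. Then M_I is right cancellative: for all x, y, z ∈ M_I, x·z = y·z implies x = y. Moreover M_I is J-trivial: for all x, y ∈ M_I, if there exist p, q, r, s ∈ M_I with p·x·q = y and r·y·s = x, then x = y. -/
theorem FreeMonoid.ofList_replicate {α : Type*} (x : α) (n : ℕ) :
    ofList (List.replicate n x) = of x ^ n := by
  induction n with
  | zero => rfl
  | succ n ih => rw [List.replicate_succ, ofList_cons, ih, pow_succ']

theorem Con.jTrivial_of_length_eq {α : Type*} {c : Con (FreeMonoid α)}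
    (hc : ∀ {u v}, c u v → u.length = v.length) (x y : c.Quotient) :
    (∃ p q : c.Quotient, p * x * q = y) → (∃ r s : c.Quotient, r * y * s = x) → x = y := by
  rintro ⟨p, q, rfl⟩ ⟨r, s, h⟩
  induction x using Con.induction_on with | H x => ?_
  induction p using Con.induction_on with | H p => ?_
  induction q using Con.induction_on with | H q => ?_
  induction r using Con.induction_on with | H r => ?_
  induction s using Con.induction_on with | H s => ?_
  have hlen := hc ((Con.eq c).1 h)
  simp only [FreeMonoid.length_mul] at hlen
  obtain rfl : p = 1 := FreeMonoid.length_eq_zero.1 (by omega)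
  obtain rfl : q = 1 := FreeMonoid.length_eq_zero.1 (by omega)
  simp

namespace Alpha

/-- `some i` records that the word read so far ends in `a·bⁱ`. -/
def step : Option ℕ → Alpha → Option ℕ
  | _, .a => some 0
  | s, .b => s.map Nat.succ
  | _, .c => none
  | _, .d => none

def state (s : Option ℕ) (w : List Alpha) : Option ℕ :=
  w.foldl step s

open Classical in
noncomputable def nfLetter (I : Set ℕ) (s : Option ℕ) (x : Alpha) : Alpha :=
  if x = d ∧ ∃ i ∈ I, s = some i then c else x

/-- The normal form: every `d` that follows `a·bⁱ` with `i ∈ I` becomes `c`. -/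
noncomputable def nf (I : Set ℕ) : Option ℕ → List Alpha → List Alpha
  | _, [] => []
  | s, x :: w => nfLetter I s x :: nf I (step s x) w

theorem state_append (s : Option ℕ) (u v : List Alpha) :
    state s (u ++ v) = state (state s u) v :=
  List.foldl_append

theorem nf_append (I : Set ℕ) (s : Option ℕ) (u v : List Alpha) :
    nf I s (u ++ v) = nf I s u ++ nf I (state s u) v := by
  induction u generalizing s <;> simp [nf, state, *]

theorem length_nf (I : Set ℕ) (s : Option ℕ) (w : List Alpha) :
    (nf I s w).length = w.length := by
  induction w generalizing s <;> simp [nf, *]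

theorem state_a_replicate_b (s : Option ℕ) (i : ℕ) :
    state s (a :: List.replicate i b) = some i := by
  induction i with
  | zero => rfl
  | succ i ih => rw [List.replicate_succ', ← List.cons_append, state_append, ih]; rfl

theorem nf_a_replicate_b (I : Set ℕ) (s : Option ℕ) (i : ℕ) :
    nf I s (a :: List.replicate i b) = a :: List.replicate i b := by
  induction i with
  | zero => simp [nf, nfLetter]
  | succ i ih =>
    rw [List.replicate_succ', ← List.cons_append, nf_append, ih, state_a_replicate_b]
    simp [nf, nfLetter]

theorem eq_append_of_state_none_eq_some {u : List Alpha} {i : ℕ} (h : state none u = some i) :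
    ∃ u', u = u' ++ a :: List.replicate i b := by
  induction u using List.reverseRecOn generalizing i with
  | nil => simp [state] at h
  | append_singleton u x ih =>
    rw [state_append] at h
    cases x with
    | a =>
      obtain rfl : i = 0 := by simpa [state, step, eq_comm] using h
      exact ⟨u, by simp⟩
    | b =>
      obtain ⟨j, hj, rfl⟩ := Option.map_eq_some_iff.1 h
      obtain ⟨u', rfl⟩ := ih hj
      exact ⟨u', by simp [List.replicate_succ']⟩
    | c | d => simp [state, step] at h

end Alpha

open Alpha

theorem ofList_a_replicate_b_append (i : ℕ) (x : Alpha) :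
    FreeMonoid.ofList (a :: List.replicate i b ++ [x]) = .of a * .of b ^ i * .of x := by
  simp [FreeMonoid.ofList_replicate, mul_assoc]

/-- Tracking every initial state, and the final state, is what makes this a congruence. -/
noncomputable def nfCon (I : Set ℕ) : Con (FreeMonoid Alpha) where
  toSetoid := Setoid.ker fun u s => (nf I s u.toList, state s u.toList)
  mul' {u u' v v'} hu hv := by
    funext s
    obtain ⟨hnf, hstate⟩ := Prod.ext_iff.1 (congrFun hu s)
    obtain ⟨hnf', hstate'⟩ := Prod.ext_iff.1 (congrFun hv (state s u.toList))
    dsimp only at hnf hstate hnf' hstate' ⊢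
    rw [FreeMonoid.toList_mul, FreeMonoid.toList_mul, nf_append, nf_append, state_append,
      state_append, hnf', hstate', hnf, hstate]

theorem conI_le_nfCon (I : Set ℕ) : conI I ≤ nfCon I := by
  refine Con.conGen_le.2 ?_
  rintro _ _ ⟨i, hi, rfl, rfl⟩
  rw [← ofList_a_replicate_b_append, ← ofList_a_replicate_b_append]
  funext s
  simp only [FreeMonoid.toList_ofList, nf_append, state_append, nf_a_replicate_b,
    state_a_replicate_b]
  simp [nf, nfLetter, hi, state, step]

theorem conI_d_c_of_mem {I : Set ℕ} {i : ℕ} (hi : i ∈ I) :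
    conI I (.ofList (a :: List.replicate i b ++ [d]))
      (.ofList (a :: List.replicate i b ++ [c])) := by
  rw [ofList_a_replicate_b_append, ofList_a_replicate_b_append]
  exact (conI I).symm <| ConGen.Rel.of _ _ ⟨i, hi, rfl, rfl⟩

theorem conI_ofList_nf (I : Set ℕ) (w : List Alpha) :
    conI I (.ofList w) (.ofList (nf I none w)) := by
  induction w using List.reverseRecOn with
  | nil => exact (conI I).refl _
  | append_singleton u x ih =>
    rw [nf_append, FreeMonoid.ofList_append, FreeMonoid.ofList_append]
    refine (conI I).trans ((conI I).mul ih ((conI I).refl _)) ?_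
    simp only [nf, nfLetter]
    split_ifs with h
    · obtain ⟨rfl, i, hi, hs⟩ := h
      obtain ⟨u', rfl⟩ := eq_append_of_state_none_eq_some hs
      rw [nf_append, nf_a_replicate_b, FreeMonoid.ofList_append, mul_assoc, mul_assoc,
        ← FreeMonoid.ofList_append, ← FreeMonoid.ofList_append]
      exact (conI I).mul ((conI I).refl _) (conI_d_c_of_mem hi)
    · exact (conI I).refl _

theorem conI_iff_nf_eq {I : Set ℕ} {u v : FreeMonoid Alpha} :
    conI I u v ↔ nf I none u.toList = nf I none v.toList :=
  ⟨fun h => congrArg Prod.fst (congrFun (conI_le_nfCon I h) none),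
    fun h => (conI_ofList_nf I u.toList).trans (h ▸ (conI_ofList_nf I v.toList).symm)⟩

theorem length_eq_of_conI {I : Set ℕ} {u v : FreeMonoid Alpha} (h : conI I u v) :
    u.length = v.length :=
  calc u.length = (nf I none u.toList).length := (length_nf I none _).symm
    _ = (nf I none v.toList).length := by rw [conI_iff_nf_eq.1 h]
    _ = v.length := length_nf I none _

theorem conI_of_conI_mul_right {I : Set ℕ} {u v w : FreeMonoid Alpha}
    (h : conI I (u * w) (v * w)) : conI I u v := by
  have hlen : u.length = v.length := by simpa using length_eq_of_conI h
  rw [conI_iff_nf_eq, FreeMonoid.toList_mul, FreeMonoid.toList_mul, nf_append, nf_append] at h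
  exact conI_iff_nf_eq.2 (List.append_inj h (by rw [length_nf, length_nf]; exact hlen)).1

/-- `M_I` is right cancellative and `J`-trivial. -/
theorem mi_rightCancellative_jTrivial (I : Set ℕ) :
    (∀ x y z : (conI I).Quotient, x * z = y * z → x = y) ∧
    (∀ x y : (conI I).Quotient,
      (∃ p q : (conI I).Quotient, p * x * q = y) →
      (∃ r s : (conI I).Quotient, r * y * s = x) → x = y) := by
  refine ⟨fun x y z h => ?_, Con.jTrivial_of_length_eq length_eq_of_conI⟩
  induction x using Con.induction_on
  induction y using Con.induction_on
  induction z using Con.induction_on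
  exact (Con.eq _).2 (conI_of_conI_mul_right ((Con.eq _).1 h))
end
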